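/- Let S ⊆ ℝ^N be a convex set on which the Jacobian J(v) of the load-flow map F is nonsingular at every point. Then F is injective on S; in particular, for any given injections (p₁, …, p_N), there is at most one v ∈ S with F(v) = (p₁, …, p_N). -/

import Mathlib

/-- Extension of a PQ-bus voltage vector `u : Fin N → ℝ` to bus indices `{0,…,N}`:
bus `k ∈ {1,…,N}` gets voltage `u (k-1)`, and bus `0` (the slack) gets `v₀`. -/
def extV (N : ℕ) (v₀ : ℝ) (u : Fin N → ℝ) : ℕ → ℝ :=
  fun k => if h : 1 ≤ k ∧ k ≤ N then u ⟨k - 1, by omega⟩ else v₀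

/-- The load-flow map `F : ℝ^N → ℝ^N`, with
`F_n(v) = (Σ_{k∈K(n)} g_{nk}) v_n² − (Σ_{k∈K(n)} g_{nk} v_k) v_n` for the PQ bus `n = i+1`. -/
def Fmap (N : ℕ) (K : ℕ → Finset ℕ) (g : ℕ → ℕ → ℝ) (v₀ : ℝ)
    (u : Fin N → ℝ) : Fin N → ℝ :=
  fun i => (∑ k ∈ K ((i : ℕ) + 1), g ((i : ℕ) + 1) k) * (u i) ^ 2
    - (∑ k ∈ K ((i : ℕ) + 1), g ((i : ℕ) + 1) k * extV N v₀ u k) * u i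

/-- The Jacobian matrix `J(v)` of the load-flow map. -/
def Jmat (N : ℕ) (K : ℕ → Finset ℕ) (g : ℕ → ℕ → ℝ) (v₀ : ℝ)
    (u : Fin N → ℝ) : Matrix (Fin N) (Fin N) ℝ :=
  Matrix.of fun i j =>
    if i = j then
      2 * (∑ k ∈ K ((i : ℕ) + 1), g ((i : ℕ) + 1) k) * u i
        - ∑ k ∈ K ((i : ℕ) + 1), g ((i : ℕ) + 1) k * extV N v₀ u k
    else if ((j : ℕ) + 1) ∈ K ((i : ℕ) + 1) then
      -(g ((i : ℕ) + 1) ((j : ℕ) + 1) * u i)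
    else 0

/-! Each `F_n` is a quadratic polynomial in `v`, so the mean value theorem holds exactly at the
midpoint: `F u - F w = J((u + w) / 2) (u - w)`. If `u, w ∈ S` have the same image, the midpoint
lies in `S` by convexity, where `J` is nonsingular, hence `u = w`. -/

open Matrix

theorem Matrix.injOn_of_sub_eq_mulVec_midpoint {ι : Type*} [Fintype ι] [DecidableEq ι]
    {F : (ι → ℝ) → ι → ℝ} {J : (ι → ℝ) → Matrix ι ι ℝ} {S : Set (ι → ℝ)} (hS : Convex ℝ S)
    (hJ : ∀ v ∈ S, (J v).det ≠ 0)
    (hF : ∀ u ∈ S, ∀ w ∈ S, F u - F w = J (midpoint ℝ u w) *ᵥ (u - w)) :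
    Set.InjOn F S := by
  intro u hu w hw huw
  have hker : J (midpoint ℝ u w) *ᵥ (u - w) = 0 := by rw [← hF u hu w hw, huw, sub_self]
  exact sub_eq_zero.1 (eq_zero_of_mulVec_eq_zero (hJ _ (hS.midpoint_mem hu hw)) hker)

theorem midpoint_real_pi_apply {ι : Type*} (u w : ι → ℝ) (i : ι) :
    midpoint ℝ u w i = (u i + w i) / 2 := by
  rw [pi_midpoint_apply, midpoint_eq_smul_add, smul_eq_mul, invOf_eq_inv]
  ring

section LoadFlow

variable {N : ℕ}

theorem extV_midpoint (v₀ : ℝ) (u w : Fin N → ℝ) (k : ℕ) :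
    extV N v₀ (midpoint ℝ u w) k = (extV N v₀ u k + extV N v₀ w k) / 2 := by
  unfold extV
  split
  · rw [midpoint_real_pi_apply]
  · ring

theorem extV_sub (v₀ : ℝ) (u w : Fin N → ℝ) (k : ℕ) :
    extV N v₀ u k - extV N v₀ w k = extV N 0 (u - w) k := by
  unfold extV
  split <;> simp

theorem extV_zero_eq_sum (d : Fin N → ℝ) (k : ℕ) :
    extV N 0 d k = ∑ j : Fin N, if k = (j : ℕ) + 1 then d j else 0 := by
  unfold extV
  split
  · next hk =>
    rw [Fintype.sum_eq_single ⟨k - 1, by omega⟩ fun j hj => if_neg fun h => hj (by ext; simp; omega)]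
    simp only [if_pos (by omega : k = k - 1 + 1)]
  · next hk =>
    exact (Finset.sum_eq_zero fun j _ => if_neg fun h => hk ⟨by omega, by omega⟩).symm

theorem sum_mul_extV_zero (T : Finset ℕ) (c : ℕ → ℝ) (d : Fin N → ℝ) :
    ∑ k ∈ T, c k * extV N 0 d k = ∑ j : Fin N, if (j : ℕ) + 1 ∈ T then c (j + 1) * d j else 0 := by
  simp_rw [extV_zero_eq_sum, Finset.mul_sum, mul_ite, mul_zero]
  rw [Finset.sum_comm]
  refine Finset.sum_congr rfl fun j _ => ?_
  rw [Finset.sum_ite_eq']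

variable {K : ℕ → Finset ℕ} {g : ℕ → ℕ → ℝ} {v₀ : ℝ}

theorem Jmat_mulVec_apply {i : Fin N} (hi : (i : ℕ) + 1 ∉ K ((i : ℕ) + 1)) (m d : Fin N → ℝ) :
    (Jmat N K g v₀ m *ᵥ d) i = Jmat N K g v₀ m i i * d i
      - m i * ∑ k ∈ K ((i : ℕ) + 1), g ((i : ℕ) + 1) k * extV N 0 d k := by
  have hentry : ∀ j, Jmat N K g v₀ m i j * d j = (if i = j then Jmat N K g v₀ m i i * d i else 0)
      - m i * if (j : ℕ) + 1 ∈ K ((i : ℕ) + 1) then g ((i : ℕ) + 1) ((j : ℕ) + 1) * d j else 0 := by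
    intro j
    by_cases hij : i = j
    · subst hij; simp [hi]
    · simp only [Jmat, Matrix.of_apply, if_neg hij]
      split_ifs <;> ring
  rw [mulVec, dotProduct, Finset.sum_congr rfl fun j _ => hentry j, Finset.sum_sub_distrib,
    Finset.sum_ite_eq, if_pos (Finset.mem_univ i), sum_mul_extV_zero, Finset.mul_sum]

theorem Fmap_sub_Fmap_apply (u w : Fin N → ℝ) (i : Fin N) :
    Fmap N K g v₀ u i - Fmap N K g v₀ w i = Jmat N K g v₀ (midpoint ℝ u w) i i * (u i - w i)
      - midpoint ℝ u w i * ∑ k ∈ K ((i : ℕ) + 1), g ((i : ℕ) + 1) k * extV N 0 (u - w) k := by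
  have hmid : ∑ k ∈ K ((i : ℕ) + 1), g ((i : ℕ) + 1) k * extV N v₀ (midpoint ℝ u w) k
      = (∑ k ∈ K ((i : ℕ) + 1), g ((i : ℕ) + 1) k * extV N v₀ u k
        + ∑ k ∈ K ((i : ℕ) + 1), g ((i : ℕ) + 1) k * extV N v₀ w k) / 2 := by
    rw [← Finset.sum_add_distrib, Finset.sum_div]
    exact Finset.sum_congr rfl fun k _ => by rw [extV_midpoint]; ring
  have hdiff : ∑ k ∈ K ((i : ℕ) + 1), g ((i : ℕ) + 1) k * extV N 0 (u - w) k
      = ∑ k ∈ K ((i : ℕ) + 1), g ((i : ℕ) + 1) k * extV N v₀ u k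
        - ∑ k ∈ K ((i : ℕ) + 1), g ((i : ℕ) + 1) k * extV N v₀ w k := by
    simp only [← extV_sub v₀ u w, mul_sub, Finset.sum_sub_distrib]
  simp only [Fmap, Jmat, Matrix.of_apply, ↓reduceIte, hmid, hdiff, midpoint_real_pi_apply]
  ring

theorem Fmap_sub_Fmap_eq_Jmat_midpoint_mulVec (hK : ∀ i : Fin N, (i : ℕ) + 1 ∉ K ((i : ℕ) + 1))
    (u w : Fin N → ℝ) :
    Fmap N K g v₀ u - Fmap N K g v₀ w = Jmat N K g v₀ (midpoint ℝ u w) *ᵥ (u - w) := by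
  ext i
  rw [Pi.sub_apply, Fmap_sub_Fmap_apply, Jmat_mulVec_apply (hK i), Pi.sub_apply]

end LoadFlow

theorem jacobian_nonsingular_on_convex_implies_injective_general
    (N : ℕ)
    (K : ℕ → Finset ℕ)
    (hKsub : ∀ n, n ≤ N → ∀ k ∈ K n, k ≤ N ∧ k ≠ n)
    (g : ℕ → ℕ → ℝ)
    (v₀ : ℝ)
    (S : Set (Fin N → ℝ)) (hS : Convex ℝ S)
    (hJ : ∀ v ∈ S, (Jmat N K g v₀ v).det ≠ 0) :
    Set.InjOn (Fmap N K g v₀) S ∧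
    ∀ p : Fin N → ℝ, ∀ u ∈ S, ∀ w ∈ S,
      Fmap N K g v₀ u = p → Fmap N K g v₀ w = p → u = w := by
  have hloop : ∀ i : Fin N, (i : ℕ) + 1 ∉ K ((i : ℕ) + 1) := fun i h => (hKsub _ i.isLt _ h).2 rfl
  have hinj : Set.InjOn (Fmap N K g v₀) S := injOn_of_sub_eq_mulVec_midpoint hS hJ
    fun u _ w _ => Fmap_sub_Fmap_eq_Jmat_midpoint_mulVec hloop u w
  exact ⟨hinj, fun _ u hu w hw hup hwp => hinj hu hw (hup.trans hwp.symm)⟩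

/-- Let `S ⊆ ℝ^N` be a convex set on which the Jacobian `J(v)` of the load-flow map `F` is
nonsingular at every point.  Then `F` is injective on `S`; in particular, for any given
injections `p`, there is at most one `v ∈ S` with `F(v) = p`. -/
theorem jacobian_nonsingular_on_convex_implies_injective
    (N : ℕ) (hN : 1 ≤ N)
    (K : ℕ → Finset ℕ)
    (hKsub : ∀ n, n ≤ N → ∀ k ∈ K n, k ≤ N ∧ k ≠ n)
    (hKsymm : ∀ n, n ≤ N → ∀ k, k ≤ N → (k ∈ K n ↔ n ∈ K k))
    (g : ℕ → ℕ → ℝ)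
    (hg : ∀ n k, k ∈ K n → 0 < g n k)
    (hgsymm : ∀ n k, g n k = g k n)
    (v₀ : ℝ) (hv₀ : 0 < v₀)
    (S : Set (Fin N → ℝ)) (hS : Convex ℝ S)
    (hJ : ∀ v ∈ S, (Jmat N K g v₀ v).det ≠ 0) :
    Set.InjOn (Fmap N K g v₀) S ∧
    ∀ p : Fin N → ℝ, ∀ u ∈ S, ∀ w ∈ S,
      Fmap N K g v₀ u = p → Fmap N K g v₀ w = p → u = w :=
  jacobian_nonsingular_on_convex_implies_injective_general N K hKsub g v₀ S hS hJ
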